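/- Let ∗ be a finite character star-operation on an integral domain D and let {a_α} be a family of nonzero elements of D. If ({a_α})_∗ is ∗-invertible, then for every positive integer n, ({a_α^n})_∗ = (({a_α})^n)_∗. -/

import Mathlib

open FractionalIdeal

variable (D : Type*) (K : Type*) [CommRing D] [IsDomain D] [Field K] [Algebra D K]
  [IsFractionRing D K]

/-- A finite character star-operation on the integral domain `D`, acting on the
nonzero fractional ideals of `D` inside its quotient field `K`. -/
structure StarOperation where
  star : FractionalIdeal (nonZeroDivisors D) K → FractionalIdeal (nonZeroDivisors D) K
  star_principal : ∀ x : K, x ≠ 0 →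
    star (spanSingleton (nonZeroDivisors D) x) = spanSingleton (nonZeroDivisors D) x
  star_smul : ∀ (x : K) (A : FractionalIdeal (nonZeroDivisors D) K), x ≠ 0 → A ≠ 0 →
    star (spanSingleton (nonZeroDivisors D) x * A) = spanSingleton (nonZeroDivisors D) x * star A
  le_star : ∀ A, A ≠ 0 → A ≤ star A
  star_mono : ∀ A B, A ≠ 0 → B ≠ 0 → A ≤ B → star A ≤ star B
  star_star : ∀ A, A ≠ 0 → star (star A) = star A
  finite_character : ∀ A, A ≠ 0 → ∀ x ∈ star A,
    ∃ B : FractionalIdeal (nonZeroDivisors D) K,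
      B ≠ 0 ∧ B ≤ A ∧ (B : Submodule D K).FG ∧ x ∈ star B

/-- A prime ideal of height one: a nonzero prime with no nonzero prime strictly below it. -/
def HeightOnePrime (P : Ideal D) : Prop :=
  P.IsPrime ∧ P ≠ ⊥ ∧ ∀ Q : Ideal D, Q.IsPrime → Q < P → Q = ⊥

/-- Membership of `x : K` in the localization `D_P` viewed inside `K`. -/
def MemLocAt (P : Ideal D) (x : K) : Prop :=
  ∃ a t : D, t ∉ P ∧ x * algebraMap D K t = algebraMap D K a

/-- An almost valuation ring: for nonzero `a, b` some power `a^n` divides `b^n` or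
conversely. -/
def AVRing (R : Type*) [CommRing R] : Prop :=
  ∀ a b : R, a ≠ 0 → b ≠ 0 → ∃ n : ℕ, 0 < n ∧ (a ^ n ∣ b ^ n ∨ b ^ n ∣ a ^ n)

/-- The `v`-operation `A ↦ (A⁻¹)⁻¹` on fractional ideals. -/
noncomputable def vOp (A : FractionalIdeal (nonZeroDivisors D) K) : FractionalIdeal (nonZeroDivisors D) K :=
  (A⁻¹)⁻¹

/-- An integral ideal is a `t`-ideal if it contains `B_v` for every nonzero finitely
generated subideal `B`. -/
def IsTIdeal (I : Ideal D) : Prop :=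
  ∀ B : Ideal D, B ≠ ⊥ → B.FG → B ≤ I →
    vOp D K (B : FractionalIdeal (nonZeroDivisors D) K) ≤ (I : FractionalIdeal (nonZeroDivisors D) K)

/-- Maximal `t`-ideals. -/
def IsTMax (P : Ideal D) : Prop :=
  P ≠ ⊥ ∧ P ≠ ⊤ ∧ IsTIdeal D K P ∧
    ∀ J : Ideal D, J ≠ ⊤ → IsTIdeal D K J → P ≤ J → J = P

/-- An integral ideal is a `w`-ideal if it contains every `x ∈ K` with `xJ ⊆ I` for
some finitely generated ideal `J` with `J⁻¹ = D`. -/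
def IsWIdeal (I : Ideal D) : Prop :=
  ∀ x : K, (∃ J : Ideal D, J.FG ∧ ((J : FractionalIdeal (nonZeroDivisors D) K))⁻¹ = 1 ∧
      spanSingleton (nonZeroDivisors D) x * (J : FractionalIdeal (nonZeroDivisors D) K) ≤
        (I : FractionalIdeal (nonZeroDivisors D) K)) →
    x ∈ (I : FractionalIdeal (nonZeroDivisors D) K)

/-- Maximal `w`-ideals. -/
def IsWMax (P : Ideal D) : Prop :=
  P ≠ ⊥ ∧ P ≠ ⊤ ∧ IsWIdeal D K P ∧
    ∀ J : Ideal D, J ≠ ⊤ → IsWIdeal D K J → P ≤ J → J = P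

/-- `P ∈ Ass(K/D)`: `P` is a prime minimal over a conductor ideal `(aD : bD)`. -/
def InAssKD (P : Ideal D) : Prop :=
  P.IsPrime ∧ ∃ a b : D, a ≠ 0 ∧ b ≠ 0 ∧
    (Ideal.span {a}).colon (Ideal.span {b}) ≤ P ∧
    ∀ Q : Ideal D, Q.IsPrime → (Ideal.span {a}).colon (Ideal.span {b}) ≤ Q → Q ≤ P → Q = P

/-- An AGCD (almost GCD) domain: for all nonzero `a, b` there is `n ≥ 1` with
`(aⁿ, bⁿ)_v` principal. -/
def IsAGCDDomain : Prop :=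
  ∀ a b : D, a ≠ 0 → b ≠ 0 → ∃ n : ℕ, 0 < n ∧ ∃ d : D,
    vOp D K ((Ideal.span {a ^ n, b ^ n} : Ideal D) : FractionalIdeal (nonZeroDivisors D) K) =
      spanSingleton (nonZeroDivisors D) (algebraMap D K d)

/-- `D_P` is an almost valuation domain, for `P` a prime of `D`. -/
def AVAtPrime {D : Type*} [CommRing D] (P : Ideal D) (hP : P.IsPrime) : Prop :=
  AVRing (Localization (@Ideal.primeCompl D _ P hP))

namespace StarOperation

variable {D K}
variable (s : StarOperation D K)

/-- The star closure of an integral ideal, as an integral ideal. -/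
def starI (I : Ideal D) : Ideal D :=
  (s.star (I : FractionalIdeal (nonZeroDivisors D) K) : Submodule D K).comap
    (Algebra.linearMap D K)

/-- An integral `∗`-ideal. -/
def IsStarIdeal (I : Ideal D) : Prop :=
  s.star (I : FractionalIdeal (nonZeroDivisors D) K) = (I : FractionalIdeal (nonZeroDivisors D) K)

/-- A maximal `∗`-ideal: maximal among proper integral `∗`-ideals (such ideals are prime). -/
def IsMaxStarIdeal (P : Ideal D) : Prop :=
  P ≠ ⊥ ∧ P ≠ ⊤ ∧ P.IsPrime ∧ s.IsStarIdeal P ∧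
    ∀ J : Ideal D, J ≠ ⊤ → s.IsStarIdeal J → P ≤ J → J = P

/-- `∗`-invertibility of a fractional ideal. -/
def IsStarInvertible (A : FractionalIdeal (nonZeroDivisors D) K) : Prop :=
  s.star (A * A⁻¹) = 1

/-- `∗`-invertibility of an integral ideal. -/
def IsStarInvertibleI (I : Ideal D) : Prop :=
  s.IsStarInvertible (I : FractionalIdeal (nonZeroDivisors D) K)

/-- A `P`-`∗`-homogeneous ideal: nonzero, finitely generated, contained in the maximal
`∗`-ideal `P` and in no other maximal `∗`-ideal. -/
def IsHomogeneous (P I : Ideal D) : Prop :=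
  I ≠ ⊥ ∧ I.FG ∧ s.IsMaxStarIdeal P ∧ I ≤ P ∧
    ∀ Q : Ideal D, s.IsMaxStarIdeal Q → I ≤ Q → Q = P

/-- A type 1 `∗`-homogeneous ideal: `M(A) = √(A_∗)`. -/
def IsType1 (P I : Ideal D) : Prop := P = (s.starI I).radical

/-- A type 2 `∗`-homogeneous ideal: `A_∗ = (M(A)ⁿ)_∗` for some `n ≥ 1`. -/
def IsType2 (P I : Ideal D) : Prop :=
  ∃ n : ℕ, 0 < n ∧
    s.star (I : FractionalIdeal (nonZeroDivisors D) K) =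
      s.star ((P ^ n : Ideal D) : FractionalIdeal (nonZeroDivisors D) K)

/-- A `P`-`∗`-almost super-homogeneous ideal. -/
def IsAlmostSuperHomogeneous (P I : Ideal D) : Prop :=
  s.IsStarInvertibleI I ∧ s.IsHomogeneous P I ∧
    ∀ (k : ℕ) (b : Fin k → D), (∀ i, b i ∈ P) →
      (∃ r : ℕ, 0 < r ∧ ((I ^ r : Ideal D) : FractionalIdeal (nonZeroDivisors D) K) ≤
        s.star ((Ideal.span (Set.range b) : Ideal D) : FractionalIdeal (nonZeroDivisors D) K)) →
      ∃ n : ℕ, 0 < n ∧ s.IsStarInvertibleI (Ideal.span (Set.range fun i => b i ^ n))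

/-- A `∗`-super-homogeneous ideal: every `∗`-homogeneous ideal containing it is
`∗`-invertible. -/
def IsSuperHomogeneous (P I : Ideal D) : Prop :=
  s.IsHomogeneous P I ∧
    ∀ B Q : Ideal D, s.IsHomogeneous Q B → I ≤ B → s.IsStarInvertibleI B

/-- A `P`-`∗`-afg-homogeneous (almost factorial general homogeneous) ideal. -/
def IsAfgHomogeneous (P I : Ideal D) : Prop :=
  s.IsStarInvertibleI I ∧ s.IsHomogeneous P I ∧
    ∀ (k : ℕ) (b : Fin k → D), (∀ i, b i ∈ P) →
      (∃ r : ℕ, 0 < r ∧ ((I ^ r : Ideal D) : FractionalIdeal (nonZeroDivisors D) K) ≤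
        s.star ((Ideal.span (Set.range b) : Ideal D) : FractionalIdeal (nonZeroDivisors D) K)) →
      ∃ n : ℕ, 0 < n ∧ ∃ d : D,
        s.star ((Ideal.span (Set.range fun i => b i ^ n) : Ideal D) :
            FractionalIdeal (nonZeroDivisors D) K) =
          spanSingleton (nonZeroDivisors D) (algebraMap D K d)

/-- A `∗`-af-homogeneous ideal: every `∗`-homogeneous ideal containing it has a power
whose `∗`-closure is principal. -/
def IsAfHomogeneous (P I : Ideal D) : Prop :=
  s.IsHomogeneous P I ∧
    ∀ B Q : Ideal D, s.IsHomogeneous Q B → I ≤ B →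
      ∃ n : ℕ, 0 < n ∧ ∃ d : D,
        s.star ((B ^ n : Ideal D) : FractionalIdeal (nonZeroDivisors D) K) =
          spanSingleton (nonZeroDivisors D) (algebraMap D K d)

/-- `D` is a `∗`-SH domain with respect to a property of ideals: every nonzero proper
principal ideal is a `∗`-product of ideals with the given property. -/
def IsSHWith (prop : Ideal D → Prop) : Prop :=
  ∀ x : D, x ≠ 0 → ¬IsUnit x →
    ∃ (k : ℕ) (A : Fin k → Ideal D), (∀ i, prop (A i)) ∧
      s.star ((∏ i, A i : Ideal D) : FractionalIdeal (nonZeroDivisors D) K) =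
        ((Ideal.span {x} : Ideal D) : FractionalIdeal (nonZeroDivisors D) K)

/-- A `∗`-almost super-SH domain. -/
def IsAlmostSuperSH : Prop :=
  s.IsSHWith fun I => ∃ P, s.IsAlmostSuperHomogeneous P I

/-- Finite character: every nonzero nonunit lies in only finitely many maximal
`∗`-ideals. -/
def FiniteCharacterDom : Prop :=
  ∀ x : D, x ≠ 0 → ¬IsUnit x → {P : Ideal D | s.IsMaxStarIdeal P ∧ x ∈ P}.Finite

/-- Independence: no two distinct maximal `∗`-ideals contain a common nonzero prime. -/
def IndependentDom : Prop :=
  ∀ P Q : Ideal D, s.IsMaxStarIdeal P → s.IsMaxStarIdeal Q → P ≠ Q →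
    ∀ L : Ideal D, L.IsPrime → L ≠ ⊥ → ¬(L ≤ P ∧ L ≤ Q)

/-- A `∗`-h-local domain. -/
def IsHLocal : Prop := s.FiniteCharacterDom ∧ s.IndependentDom

/-- A `∗`-almost independent ring of Krull type. -/
def IsAlmostIRKT : Prop :=
  s.IsHLocal ∧ ∀ (P : Ideal D) (h : s.IsMaxStarIdeal P), AVAtPrime P h.2.2.1

/-- A `∗`-almost generalized Krull domain. -/
def IsAGKD : Prop :=
  (∀ x : K, (∀ P : Ideal D, HeightOnePrime D P → MemLocAt D K P x) →
      ∃ d : D, algebraMap D K d = x) ∧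
  (∀ x : D, x ≠ 0 → ¬IsUnit x → {P : Ideal D | HeightOnePrime D P ∧ x ∈ P}.Finite) ∧
  (∀ P : Ideal D, s.IsMaxStarIdeal P ↔ HeightOnePrime D P) ∧
  (∀ (P : Ideal D) (h : s.IsMaxStarIdeal P), AVAtPrime P h.2.2.1)

/-- A `∗`-Krull domain: `∗`-h-local, `∗-Max(D) = X⁽¹⁾(D)`, and `D_P` is a DVR for each
maximal `∗`-ideal `P`. -/
def IsStarKrull : Prop :=
  s.IsHLocal ∧ (∀ P : Ideal D, s.IsMaxStarIdeal P ↔ HeightOnePrime D P) ∧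
    ∀ (P : Ideal D) (h : s.IsMaxStarIdeal P),
      @IsDiscreteValuationRing (Localization (@Ideal.primeCompl D _ P h.2.2.1)) _
        (IsLocalization.isDomain_localization (@Ideal.primeCompl_le_nonZeroDivisors D _ _ P h.2.2.1))

/-- A `∗`-almost Bézout domain. -/
def IsAlmostBezout : Prop :=
  ∀ a b : D, a ≠ 0 → b ≠ 0 → ∃ n : ℕ, 0 < n ∧ ∃ d : D,
    s.star ((Ideal.span {a ^ n, b ^ n} : Ideal D) : FractionalIdeal (nonZeroDivisors D) K) =
      spanSingleton (nonZeroDivisors D) (algebraMap D K d)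

/-- The `∗`-class group `Cl_∗(D)` is torsion: every `∗`-invertible fractional ideal has a
power whose `∗`-closure is principal. -/
def HasTorsionClassGroup : Prop :=
  ∀ A : FractionalIdeal (nonZeroDivisors D) K, A ≠ 0 → s.IsStarInvertible A →
    ∃ n : ℕ, 0 < n ∧ ∃ x : K, s.star (A ^ n) = spanSingleton (nonZeroDivisors D) x

end StarOperation

variable {D : Type*} {K : Type*} [CommRing D] [IsDomain D] [Field K] [Algebra D K]
  [IsFractionRing D K]

open StarOperation

/-!
Since `A_∗` is `∗`-invertible so is `A = ({a_α})`, and finite character turns `(AA⁻¹)_∗ = D`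
into `(FA⁻¹)_∗ = D` for the ideal `F` generated by finitely many of the `a_α`, say `m` of them;
then `F_∗ = A_∗` and `F` is `∗`-invertible. In a product of `m(n-1) + n` generators of `F` one
of them occurs `n` times, so `F^(m(n-1)+n) ⊆ ({a_α^n}) F^(m(n-1))`, and cancelling the
`∗`-invertible `F^(m(n-1))` gives `(Fⁿ)_∗ ⊆ ({a_α^n})_∗`. The reverse inclusion comes from
`({a_α^n}) ⊆ Aⁿ`.
-/

open scoped nonZeroDivisors

namespace FractionalIdeal

instance {R P : Type*} [CommRing R] {S : Submonoid R} [CommRing P] [Algebra R P]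
    [NoZeroDivisors P] : NoZeroDivisors (FractionalIdeal S P) :=
  coeToSubmodule_injective.noZeroDivisors _ coe_zero coe_mul

protected theorem inv_ne_zero {A : FractionalIdeal D⁰ K} (hA : A ≠ 0) : A⁻¹ ≠ 0 := by
  obtain ⟨d, hd, hdA⟩ := A.isFractional
  have hd_mem : algebraMap D K d ∈ A⁻¹ := by
    rw [mem_inv_iff hA]
    intro y hy
    obtain ⟨c, hc⟩ := hdA y hy
    exact (mem_one_iff _).mpr ⟨c, by rw [hc, Algebra.smul_def]⟩
  intro h
  rw [h, mem_zero_iff] at hd_mem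
  exact IsFractionRing.to_map_ne_zero_of_mem_nonZeroDivisors hd hd_mem

theorem mul_inv_le_one (A : FractionalIdeal D⁰ K) : A * A⁻¹ ≤ 1 :=
  mul_one_div_le_one

theorem inv_mul_inv_le_inv_mul {A B : FractionalIdeal D⁰ K} (hA : A ≠ 0) (hB : B ≠ 0) :
    A⁻¹ * B⁻¹ ≤ (A * B)⁻¹ := by
  rw [inv_eq (I := A * B), le_div_iff_mul_le (mul_ne_zero hA hB)]
  calc A⁻¹ * B⁻¹ * (A * B) = A * A⁻¹ * (B * B⁻¹) := by ring
    _ ≤ 1 * 1 := mul_le_mul' (mul_inv_le_one A) (mul_inv_le_one B)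
    _ = 1 := one_mul 1

theorem coeIdeal_span_image_pow_ne_zero {S : Set D} {n : ℕ} (hn : n ≠ 0)
    (hS : (Ideal.span S : FractionalIdeal D⁰ K) ≠ 0) :
    (Ideal.span ((· ^ n) '' S) : FractionalIdeal D⁰ K) ≠ 0 := by
  simpa [Ideal.span_eq_bot, pow_eq_zero_iff hn] using hS

end FractionalIdeal

namespace Ideal

open Finset

variable {R : Type*} [CommSemiring R]

theorem span_range_pow_le_pow {ι : Type*} (a : ι → R) (n : ℕ) :
    span (Set.range fun i => a i ^ n) ≤ span (Set.range a) ^ n :=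
  span_le.mpr <| Set.range_subset_iff.mpr fun i => pow_mem_pow (subset_span (Set.mem_range_self i)) n

theorem prod_mem_span_image_pow_mul_span_pow (F : Finset R) {n : ℕ} (hn : 0 < n)
    (v : Fin (#F * (n - 1) + n) → R) (hv : ∀ i, v i ∈ F) :
    ∏ i, v i ∈ span ((· ^ n) '' (F : Set R)) * span (F : Set R) ^ (#F * (n - 1)) := by
  classical
  obtain ⟨x, hxF, hx⟩ := exists_lt_card_fiber_of_mul_lt_card_of_maps_to (s := univ) (n := n - 1)
    (fun i _ => hv i) (by simp only [card_univ, Fintype.card_fin]; omega)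
  obtain ⟨T, hT, hTcard⟩ := exists_subset_card_eq (show n ≤ #{i | v i = x} by omega)
  rw [← prod_mul_prod_compl T]
  refine mul_mem_mul ?_ ?_
  · rw [prod_congr rfl fun i hi => (mem_filter.mp (hT hi)).2, prod_const, hTcard]
    exact subset_span ⟨x, hxF, rfl⟩
  · have hcard : #Tᶜ = #F * (n - 1) := by
      rw [card_compl, hTcard, Fintype.card_fin]
      omega
    have h := prod_mem_prod (s := Tᶜ) (I := fun _ => span (F : Set R))
      fun i _ => subset_span (hv i)
    rwa [prod_const, hcard] at h

theorem span_pow_le_span_image_pow_mul_span_pow (F : Finset R) {n : ℕ} (hn : 0 < n) :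
    span (F : Set R) ^ (#F * (n - 1) + n) ≤
      span ((· ^ n) '' (F : Set R)) * span (F : Set R) ^ (#F * (n - 1)) := by
  rw [span, Submodule.span_pow, ← span, span_le]
  intro z hz
  obtain ⟨v, rfl⟩ := Set.mem_pow.mp hz
  rw [List.prod_ofFn]
  exact prod_mem_span_image_pow_mul_span_pow F hn _ fun i => (v i).2

end Ideal

namespace StarOperation

variable {D K : Type*} [CommRing D] [Field K] [Algebra D K] [IsFractionRing D K]
variable (s : StarOperation D K) {A B C E : FractionalIdeal D⁰ K}

theorem star_ne_zero (hA : A ≠ 0) : s.star A ≠ 0 :=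
  fun h => hA (_root_.le_zero_iff.mp (h ▸ s.le_star A hA))

theorem star_one : s.star 1 = 1 := by
  simpa only [spanSingleton_one] using s.star_principal 1 one_ne_zero

theorem star_le_one (hA : A ≠ 0) (h : A ≤ 1) : s.star A ≤ 1 :=
  s.star_one ▸ s.star_mono A 1 hA one_ne_zero h

theorem one_le_star_iff : 1 ≤ s.star A ↔ (1 : K) ∈ s.star A := by
  rw [← spanSingleton_one, spanSingleton_le_iff_mem]

theorem star_mul_le_star_mul (hA : A ≠ 0) (hB : B ≠ 0) : s.star A * B ≤ s.star (A * B) := by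
  refine mul_le.mpr fun x hx y hy => ?_
  rcases eq_or_ne y 0 with rfl | hy0
  · simpa only [mul_zero] using (s.star (A * B)).zero_mem
  have hyA : spanSingleton D⁰ y * A ≤ A * B := by
    rw [mul_comm A]
    exact mul_le_mul_left (spanSingleton_le_iff_mem.mpr hy) A
  refine s.star_mono _ _ (mul_ne_zero (spanSingleton_ne_zero_iff.mpr hy0) hA) (mul_ne_zero hA hB)
    hyA ?_
  rw [s.star_smul y A hy0 hA, mul_comm x]
  exact mul_mem_mul (mem_spanSingleton_self _ y) hx

theorem star_star_mul (hA : A ≠ 0) (hB : B ≠ 0) : s.star (s.star A * B) = s.star (A * B) := by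
  have hAB := mul_ne_zero hA hB
  have hsAB := mul_ne_zero (s.star_ne_zero hA) hB
  refine le_antisymm ?_ (s.star_mono _ _ hAB hsAB (mul_le_mul_left (s.le_star A hA) B))
  calc s.star (s.star A * B) ≤ s.star (s.star (A * B)) :=
        s.star_mono _ _ hsAB (s.star_ne_zero hAB) (s.star_mul_le_star_mul hA hB)
    _ = s.star (A * B) := s.star_star _ hAB

theorem star_mul_star (hA : A ≠ 0) (hB : B ≠ 0) : s.star (A * s.star B) = s.star (A * B) := by
  rw [mul_comm, s.star_star_mul hB hA, mul_comm]

theorem star_pow_eq_star_pow (hA : A ≠ 0) (hB : B ≠ 0) (h : s.star A = s.star B) :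
    ∀ k : ℕ, s.star (A ^ k) = s.star (B ^ k)
  | 0 => rfl
  | k + 1 => by
    rw [pow_succ, pow_succ, ← s.star_mul_star (pow_ne_zero k hA) hA, h,
      s.star_mul_star (pow_ne_zero k hA) hB, ← s.star_star_mul (pow_ne_zero k hA) hB,
      star_pow_eq_star_pow hA hB h k, s.star_star_mul (pow_ne_zero k hB) hB]

variable [IsDomain D]

theorem isStarInvertible_of_star_mul_eq_one (hA : A ≠ 0) (hB : B ≠ 0) (hBA : B ≤ A⁻¹)
    (h : s.star (A * B) = 1) : s.IsStarInvertible A := by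
  have hAA : A * A⁻¹ ≠ 0 := mul_ne_zero hA (FractionalIdeal.inv_ne_zero hA)
  refine le_antisymm (s.star_le_one hAA (mul_inv_le_one A)) ?_
  exact h ▸ s.star_mono _ _ (mul_ne_zero hA hB) hAA (mul_le_mul_right hBA A)

variable {s}

theorem IsStarInvertible.of_star (h : s.IsStarInvertible (s.star A)) (hA : A ≠ 0) :
    s.IsStarInvertible A := by
  have hsA := s.star_ne_zero hA
  refine s.isStarInvertible_of_star_mul_eq_one hA (FractionalIdeal.inv_ne_zero hsA)
    (inv_anti_mono hA hsA (s.le_star A hA)) ?_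
  rw [← s.star_star_mul hA (FractionalIdeal.inv_ne_zero hsA)]
  exact h

theorem IsStarInvertible.mul (hA : s.IsStarInvertible A) (hB : s.IsStarInvertible B)
    (hA0 : A ≠ 0) (hB0 : B ≠ 0) : s.IsStarInvertible (A * B) := by
  have hAA : A * A⁻¹ ≠ 0 := mul_ne_zero hA0 (FractionalIdeal.inv_ne_zero hA0)
  have hBB : B * B⁻¹ ≠ 0 := mul_ne_zero hB0 (FractionalIdeal.inv_ne_zero hB0)
  refine s.isStarInvertible_of_star_mul_eq_one (mul_ne_zero hA0 hB0)
    (mul_ne_zero (FractionalIdeal.inv_ne_zero hA0) (FractionalIdeal.inv_ne_zero hB0))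
    (inv_mul_inv_le_inv_mul hA0 hB0) ?_
  rw [mul_mul_mul_comm, ← s.star_star_mul hAA hBB, hA, one_mul]
  exact hB

theorem IsStarInvertible.pow (hA : s.IsStarInvertible A) (hA0 : A ≠ 0) :
    ∀ k : ℕ, s.IsStarInvertible (A ^ k)
  | 0 => by rw [pow_zero, IsStarInvertible, inv_one, one_mul, star_one]
  | k + 1 => by
    rw [pow_succ]
    exact (hA.pow hA0 k).mul hA (pow_ne_zero k hA0) hA0

theorem IsStarInvertible.star_le_star_of_star_mul_le (hA : s.IsStarInvertible A) (hA0 : A ≠ 0)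
    (hC : C ≠ 0) (hE : E ≠ 0) (h : s.star (A * C) ≤ s.star (A * E)) : s.star C ≤ s.star E := by
  have hAi := FractionalIdeal.inv_ne_zero hA0
  have cancel : ∀ X, X ≠ 0 → s.star (A⁻¹ * s.star (A * X)) = s.star X := fun X hX => by
    rw [s.star_mul_star hAi (mul_ne_zero hA0 hX), ← mul_assoc, mul_comm A⁻¹,
      ← s.star_star_mul (mul_ne_zero hA0 hAi) hX, hA, one_mul]
  calc s.star C = s.star (A⁻¹ * s.star (A * C)) := (cancel C hC).symm
    _ ≤ s.star (A⁻¹ * s.star (A * E)) :=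
        s.star_mono _ _ (mul_ne_zero hAi (s.star_ne_zero (mul_ne_zero hA0 hC)))
          (mul_ne_zero hAi (s.star_ne_zero (mul_ne_zero hA0 hE))) (mul_le_mul_right h _)
    _ = s.star E := cancel E hE

theorem IsStarInvertible.star_eq_of_le_of_star_mul_inv_eq_one (hA : s.IsStarInvertible A)
    (hB : B ≠ 0) (hBA : B ≤ A) (h : s.star (B * A⁻¹) = 1) : s.star B = s.star A := by
  have hA0 : A ≠ 0 := ne_bot_of_le_ne_bot hB hBA
  have hAi := FractionalIdeal.inv_ne_zero hA0
  refine le_antisymm (s.star_mono B A hB hA0 hBA) (le_of_eq ?_)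
  calc s.star A = s.star (A * s.star (B * A⁻¹)) := by rw [h, mul_one]
    _ = s.star (B * s.star (A * A⁻¹)) := by
      rw [s.star_mul_star hA0 (mul_ne_zero hB hAi), s.star_mul_star hB (mul_ne_zero hA0 hAi)]
      ring_nf
    _ = s.star B := by rw [hA, mul_one]

theorem IsStarInvertible.star_pow_le_star_span_image_pow {F : Finset D}
    (hF : s.IsStarInvertible (Ideal.span (F : Set D) : FractionalIdeal D⁰ K))
    (hF0 : (Ideal.span (F : Set D) : FractionalIdeal D⁰ K) ≠ 0) {n : ℕ} (hn : 0 < n) :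
    s.star ((Ideal.span (F : Set D) : FractionalIdeal D⁰ K) ^ n) ≤
      s.star (Ideal.span ((· ^ n) '' (F : Set D)) : FractionalIdeal D⁰ K) := by
  set N := F.card * (n - 1)
  have hJ0 := coeIdeal_span_image_pow_ne_zero hn.ne' hF0
  refine (hF.pow hF0 N).star_le_star_of_star_mul_le (pow_ne_zero N hF0) (pow_ne_zero n hF0) hJ0
    (s.star_mono _ _ (mul_ne_zero (pow_ne_zero N hF0) (pow_ne_zero n hF0))
      (mul_ne_zero (pow_ne_zero N hF0) hJ0) ?_)
  rw [← pow_add, mul_comm, ← coeIdeal_pow, ← coeIdeal_pow, ← coeIdeal_mul]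
  exact (coeIdeal_le_coeIdeal K).mpr (Ideal.span_pow_le_span_image_pow_mul_span_pow F hn)

theorem IsStarInvertible.exists_finset_star_mul_inv_eq_one {ι : Type*} {a : ι → D}
    (hA : s.IsStarInvertible (Ideal.span (Set.range a) : FractionalIdeal D⁰ K))
    (hA0 : (Ideal.span (Set.range a) : FractionalIdeal D⁰ K) ≠ 0) :
    ∃ F : Finset D, ↑F ⊆ Set.range a ∧ (Ideal.span (F : Set D) : FractionalIdeal D⁰ K) ≠ 0 ∧
      s.star (Ideal.span (F : Set D) * (Ideal.span (Set.range a) : FractionalIdeal D⁰ K)⁻¹) = 1 := by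
  classical
  set A : FractionalIdeal D⁰ K := ((Ideal.span (Set.range a) : Ideal D) : FractionalIdeal D⁰ K)
  have hAA : A * A⁻¹ ≠ 0 := mul_ne_zero hA0 (FractionalIdeal.inv_ne_zero hA0)
  obtain ⟨C, hC0, hCA, hCfg, hC1⟩ := s.finite_character _ hAA 1 (by rw [hA]; exact one_mem_one _)
  have hA_eq : (A : Submodule D K) = ⨆ α, D ∙ algebraMap D K (a α) := by
    rw [coe_coeIdeal, IsLocalization.coeSubmodule_span, ← Set.range_comp,
      Submodule.span_range_eq_iSup]
    rfl
  obtain ⟨t, ht⟩ := CompleteLattice.IsCompactElement.exists_finset_of_le_iSup _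
    ((Submodule.fg_iff_compact _).mp hCfg)
    (fun α => (D ∙ algebraMap D K (a α)) * ((A⁻¹ : FractionalIdeal D⁰ K) : Submodule D K))
    (by rw [← Submodule.iSup_mul, ← hA_eq, ← coe_mul]; exact hCA)
  set F : FractionalIdeal D⁰ K := ((Ideal.span (a '' t) : Ideal D) : FractionalIdeal D⁰ K)
  have hCF : C ≤ F * A⁻¹ := by
    refine ht.trans (iSup₂_le fun α hα => ?_)
    rw [coe_mul]
    refine mul_le_mul_left ?_ _
    rw [Submodule.span_singleton_le_iff_mem, mem_coe]
    exact mem_coeIdeal_of_mem _ (Ideal.subset_span ⟨α, hα, rfl⟩)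
  have hFA0 : F * A⁻¹ ≠ 0 := ne_bot_of_le_ne_bot hC0 hCF
  have hFA : F ≤ A := (coeIdeal_le_coeIdeal K).mpr (Ideal.span_mono (Set.image_subset_range a t))
  refine ⟨t.image a, by simp, ?_⟩
  rw [Finset.coe_image]
  refine ⟨left_ne_zero_of_mul hFA0, le_antisymm ?_ ?_⟩
  · exact s.star_le_one hFA0 ((mul_le_mul_left hFA _).trans (mul_inv_le_one A))
  · exact s.one_le_star_iff.mpr (s.star_mono _ _ hC0 hFA0 hCF hC1)

theorem IsStarInvertible.exists_finset_isStarInvertible_star_eq {ι : Type*} {a : ι → D}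
    (hA : s.IsStarInvertible (Ideal.span (Set.range a) : FractionalIdeal D⁰ K))
    (hA0 : (Ideal.span (Set.range a) : FractionalIdeal D⁰ K) ≠ 0) :
    ∃ F : Finset D, ↑F ⊆ Set.range a ∧ (Ideal.span (F : Set D) : FractionalIdeal D⁰ K) ≠ 0 ∧
      s.IsStarInvertible (Ideal.span (F : Set D) : FractionalIdeal D⁰ K) ∧
      s.star (Ideal.span (F : Set D) : FractionalIdeal D⁰ K) =
        s.star (Ideal.span (Set.range a) : FractionalIdeal D⁰ K) := by
  obtain ⟨F, hFa, hF0, hF⟩ := hA.exists_finset_star_mul_inv_eq_one hA0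
  have hFA := (coeIdeal_le_coeIdeal K).mpr (Ideal.span_mono hFa)
  exact ⟨F, hFa, hF0, s.isStarInvertible_of_star_mul_eq_one hF0
    (FractionalIdeal.inv_ne_zero hA0) (inv_anti_mono hF0 hA0 hFA) hF,
    hA.star_eq_of_le_of_star_mul_inv_eq_one hF0 hFA hF⟩

end StarOperation

theorem stmt1_general (s : StarOperation D K) {ι : Type*} (a : ι → D)
    (hinv : s.IsStarInvertible
      (s.star ((Ideal.span (Set.range a) : Ideal D) : FractionalIdeal (nonZeroDivisors D) K)))
    (n : ℕ) (hn : 0 < n) :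
    s.star ((Ideal.span (Set.range fun α => a α ^ n) : Ideal D) : FractionalIdeal (nonZeroDivisors D) K) =
      s.star (((Ideal.span (Set.range a)) ^ n : Ideal D) : FractionalIdeal (nonZeroDivisors D) K) := by
  have hpow_le := Ideal.span_range_pow_le_pow a n
  rcases eq_or_ne (Ideal.span (Set.range a)) ⊥ with hA0 | hA0
  · rw [hA0, ← Ideal.zero_eq_bot, zero_pow hn.ne'] at hpow_le ⊢
    rw [le_zero_iff.mp hpow_le]
  rw [← coeIdeal_ne_zero (K := K)] at hA0
  obtain ⟨F, hFa, hF0, hF, hstar⟩ := (hinv.of_star hA0).exists_finset_isStarInvertible_star_eq hA0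
  have hJ0 := coeIdeal_span_image_pow_ne_zero hn.ne' hF0
  have hJB : (Ideal.span ((· ^ n) '' (F : Set D)) : FractionalIdeal D⁰ K) ≤
      Ideal.span (Set.range fun α => a α ^ n) :=
    (coeIdeal_le_coeIdeal K).mpr (Ideal.span_mono ((Set.image_mono hFa).trans_eq
      (Set.range_comp _ a).symm))
  rw [coeIdeal_pow]
  refine le_antisymm (s.star_mono _ _ (ne_bot_of_le_ne_bot hJ0 hJB) (pow_ne_zero n hA0) ?_) ?_
  · rw [← coeIdeal_pow]
    exact (coeIdeal_le_coeIdeal K).mpr hpow_le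
  calc s.star ((Ideal.span (Set.range a) : FractionalIdeal D⁰ K) ^ n)
      = s.star ((Ideal.span (F : Set D) : FractionalIdeal D⁰ K) ^ n) :=
        (s.star_pow_eq_star_pow hF0 hA0 hstar n).symm
    _ ≤ s.star (Ideal.span ((· ^ n) '' (F : Set D)) : FractionalIdeal D⁰ K) :=
        hF.star_pow_le_star_span_image_pow hF0 hn
    _ ≤ _ := s.star_mono _ _ hJ0 (ne_bot_of_le_ne_bot hJ0 hJB) hJB

theorem stmt1 (s : StarOperation D K) {ι : Type*} (a : ι → D) (ha : ∀ α, a α ≠ 0)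
    (hinv : s.IsStarInvertible
      (s.star ((Ideal.span (Set.range a) : Ideal D) : FractionalIdeal (nonZeroDivisors D) K)))
    (n : ℕ) (hn : 0 < n) :
    s.star ((Ideal.span (Set.range fun α => a α ^ n) : Ideal D) : FractionalIdeal (nonZeroDivisors D) K) =
      s.star (((Ideal.span (Set.range a)) ^ n : Ideal D) : FractionalIdeal (nonZeroDivisors D) K) :=
  stmt1_general s a hinv n hn
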